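/- arXiv:1607.07813 — 3 statements merged into one kernel-verified Lean document; each statement's English description precedes it below -/
import Mathlib

section
/- Let K be a field and A a 2×2 matrix over K. Define the K-linear endomorphism Φ of K² ⊗ K² by Φ(v ⊗ w) = (A·w) ⊗ v on pure tensors. Then the characteristic polynomial of Φ equals (X² − (trace A)·X + det A)·(X² − det A). -/
/-!
In the basis `eₚ ⊗ e_q` one has `Φ (eᵢ ⊗ eⱼ) = ∑ₚ Aₚⱼ (eₚ ⊗ eᵢ)`, so the matrix of `Φ` is an explicit
`4 × 4` matrix in the entries of `A`, whose characteristic polynomial is expanded directly.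
-/

open scoped TensorProduct
open Polynomial

section

variable {R : Type*} [CommRing R]

theorem LinearMap.toMatrix_tensorProduct_basisFun_of_tmul_eq {ι : Type*} [Fintype ι]
    [DecidableEq ι] (A : Matrix ι ι R) (Φ : (ι → R) ⊗[R] (ι → R) →ₗ[R] (ι → R) ⊗[R] (ι → R))
    (hΦ : ∀ v w : ι → R, Φ (v ⊗ₜ[R] w) = (A.mulVec w) ⊗ₜ[R] v) (p q i j : ι) :
    LinearMap.toMatrix ((Pi.basisFun R ι).tensorProduct (Pi.basisFun R ι))
      ((Pi.basisFun R ι).tensorProduct (Pi.basisFun R ι)) Φ (p, q) (i, j) =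
      A p j * if q = i then 1 else 0 := by
  rw [LinearMap.toMatrix_apply, Module.Basis.tensorProduct_apply, Pi.basisFun_apply,
    Pi.basisFun_apply, hΦ, Module.Basis.tensorProduct_repr_tmul_apply]
  simp [Pi.single_apply]

/-- The matrix of `v ⊗ w ↦ A w ⊗ v` on `R² ⊗ R²`, with the basis `eₚ ⊗ e_q` indexed by
`finProdFinEquiv (p, q) = 2 p + q`. -/
def Matrix.tmulSwapMatrix (A : Matrix (Fin 2) (Fin 2) R) : Matrix (Fin 4) (Fin 4) R :=
  !![A 0 0, A 0 1, 0, 0;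
     0, 0, A 0 0, A 0 1;
     A 1 0, A 1 1, 0, 0;
     0, 0, A 1 0, A 1 1]

theorem Matrix.charpoly_tmulSwapMatrix (A : Matrix (Fin 2) (Fin 2) R) :
    A.tmulSwapMatrix.charpoly = (X ^ 2 - C A.trace * X + C A.det) * (X ^ 2 - C A.det) := by
  rw [Matrix.charpoly, Matrix.tmulSwapMatrix, Matrix.trace_fin_two, Matrix.det_fin_two]
  simp [Matrix.charmatrix_apply, Matrix.det_succ_row_zero, Fin.sum_univ_succ, Fin.succAbove]
  ring

theorem LinearMap.reindex_toMatrix_eq_tmulSwapMatrix (A : Matrix (Fin 2) (Fin 2) R)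
    (Φ : (Fin 2 → R) ⊗[R] (Fin 2 → R) →ₗ[R] (Fin 2 → R) ⊗[R] (Fin 2 → R))
    (hΦ : ∀ v w : Fin 2 → R, Φ (v ⊗ₜ[R] w) = (A.mulVec w) ⊗ₜ[R] v) :
    (LinearMap.toMatrix ((Pi.basisFun R (Fin 2)).tensorProduct (Pi.basisFun R (Fin 2)))
      ((Pi.basisFun R (Fin 2)).tensorProduct (Pi.basisFun R (Fin 2))) Φ).reindex
        finProdFinEquiv finProdFinEquiv = A.tmulSwapMatrix := by
  ext i j
  fin_cases i <;> fin_cases j <;>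
    simp [Matrix.tmulSwapMatrix, toMatrix_tensorProduct_basisFun_of_tmul_eq A Φ hΦ,
      finProdFinEquiv, Fin.divNat, Fin.modNat]

end

/-- The characteristic polynomial of the "inert Frobenius" `Φ(v ⊗ w) = (A·w) ⊗ v` on
`K² ⊗ K²` is `(X² − (tr A)X + det A)(X² − det A)`. -/
theorem stmt_2 (K : Type*) [Field K] (A : Matrix (Fin 2) (Fin 2) K)
    (Φ : (Fin 2 → K) ⊗[K] (Fin 2 → K) →ₗ[K] (Fin 2 → K) ⊗[K] (Fin 2 → K))
    (hΦ : ∀ v w : Fin 2 → K, Φ (v ⊗ₜ[K] w) = (A.mulVec w) ⊗ₜ[K] v) :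
    LinearMap.charpoly Φ =
      (Polynomial.X ^ 2 - Polynomial.C A.trace * Polynomial.X + Polynomial.C A.det) *
        (Polynomial.X ^ 2 - Polynomial.C A.det) := by
  rw [← LinearMap.charpoly_toMatrix Φ
      ((Pi.basisFun K (Fin 2)).tensorProduct (Pi.basisFun K (Fin 2))),
    ← Matrix.charpoly_reindex finProdFinEquiv,
    LinearMap.reindex_toMatrix_eq_tmulSwapMatrix A Φ hΦ, Matrix.charpoly_tmulSwapMatrix]
end

section
/- Let R be a commutative ring and A, B ∈ M₂(R). Write a = trace A, b = trace B, d_A = det A, d_B = det B. Then the characteristic polynomial of the Kronecker product A ⊗ B (a 4×4 matrix over R) equals X⁴ − a·b·X³ + (a²·d_B + b²·d_A − 2·d_A·d_B)·X² − a·b·d_A·d_B·X + (d_A·d_B)². -/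
open Polynomial
open scoped Kronecker

theorem det_fin_four' {R : Type*} [CommRing R] (M : Matrix (Fin 4) (Fin 4) R) :
    M.det =
      M 0 0 * M 1 1 * M 2 2 * M 3 3 - M 0 0 * M 1 1 * M 2 3 * M 3 2 -
      M 0 0 * M 1 2 * M 2 1 * M 3 3 + M 0 0 * M 1 2 * M 2 3 * M 3 1 +
      M 0 0 * M 1 3 * M 2 1 * M 3 2 - M 0 0 * M 1 3 * M 2 2 * M 3 1 -
      M 0 1 * M 1 0 * M 2 2 * M 3 3 + M 0 1 * M 1 0 * M 2 3 * M 3 2 +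
      M 0 1 * M 1 2 * M 2 0 * M 3 3 - M 0 1 * M 1 2 * M 2 3 * M 3 0 -
      M 0 1 * M 1 3 * M 2 0 * M 3 2 + M 0 1 * M 1 3 * M 2 2 * M 3 0 +
      M 0 2 * M 1 0 * M 2 1 * M 3 3 - M 0 2 * M 1 0 * M 2 3 * M 3 1 -
      M 0 2 * M 1 1 * M 2 0 * M 3 3 + M 0 2 * M 1 1 * M 2 3 * M 3 0 +
      M 0 2 * M 1 3 * M 2 0 * M 3 1 - M 0 2 * M 1 3 * M 2 1 * M 3 0 -
      M 0 3 * M 1 0 * M 2 1 * M 3 2 + M 0 3 * M 1 0 * M 2 2 * M 3 1 +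
      M 0 3 * M 1 1 * M 2 0 * M 3 2 - M 0 3 * M 1 1 * M 2 2 * M 3 0 -
      M 0 3 * M 1 2 * M 2 0 * M 3 1 + M 0 3 * M 1 2 * M 2 1 * M 3 0 := by
  simp only [Matrix.det_succ_row_zero, ← Nat.not_even_iff_odd, Matrix.submatrix_apply,
    Fin.succ_zero_eq_one, Matrix.submatrix_submatrix, Matrix.det_unique, Fin.default_eq_zero,
    Function.comp_apply, Fin.succ_one_eq_two, Fin.sum_univ_succ, Fin.val_zero, Fin.zero_succAbove,
    Finset.univ_unique, Fin.val_succ, Fin.val_eq_zero, Fin.succ_succAbove_zero,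
    Finset.sum_singleton, Fin.succ_succAbove_one, Even.add_self]
  simp only [show (Fin.succ 2 : Fin 4) = 3 by rfl,
    show ((1 : Fin 4).succAbove 2 : Fin 4) = 3 by decide,
    show ((2 : Fin 4).succAbove 2 : Fin 4) = 3 by decide,
    show ((Fin.succ 2 : Fin 4).succAbove 2 : Fin 4) = 2 by decide,
    show ((3 : Fin 4).succAbove 2 : Fin 4) = 2 by decide]
  ring

/-- The characteristic polynomial of a Kronecker product of two `2 × 2` matrices:
this identifies the Asai Euler factor at a split prime. -/
theorem stmt_3 (R : Type*) [CommRing R] (A B : Matrix (Fin 2) (Fin 2) R) :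
    Matrix.charpoly (A ⊗ₖ B) =
      X ^ 4 - C (A.trace * B.trace) * X ^ 3
        + C (A.trace ^ 2 * B.det + B.trace ^ 2 * A.det - 2 * (A.det * B.det)) * X ^ 2
        - C (A.trace * B.trace * (A.det * B.det)) * X
        + C ((A.det * B.det) ^ 2) := by
  rw [← Matrix.charpoly_reindex (finProdFinEquiv : Fin 2 × Fin 2 ≃ Fin 4)]
  rw [Matrix.charpoly]
  rw [show ((Matrix.reindex finProdFinEquiv finProdFinEquiv)
      (Matrix.kroneckerMap (· * ·) A B)).charmatrix =
    Matrix.of ![![X - C (A 0 0 * B 0 0), -C (A 0 0 * B 0 1), -C (A 0 1 * B 0 0), -C (A 0 1 * B 0 1)],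
      ![-C (A 0 0 * B 1 0), X - C (A 0 0 * B 1 1), -C (A 0 1 * B 1 0), -C (A 0 1 * B 1 1)],
      ![-C (A 1 0 * B 0 0), -C (A 1 0 * B 0 1), X - C (A 1 1 * B 0 0), -C (A 1 1 * B 0 1)],
      ![-C (A 1 0 * B 1 0), -C (A 1 0 * B 1 1), -C (A 1 1 * B 1 0), X - C (A 1 1 * B 1 1)]] from by
    ext i j
    fin_cases i <;> fin_cases j <;>
      simp [Matrix.charmatrix_apply, finProdFinEquiv, Matrix.diagonal] <;> rfl]
  rw [det_fin_four']
  simp only [Matrix.trace_fin_two, Matrix.det_fin_two, Matrix.cons_val', Matrix.cons_val_zero,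
    Matrix.cons_val_one, Matrix.head_cons, Matrix.empty_val', Matrix.cons_val_fin_one,
    Matrix.head_fin_const, Matrix.of_apply, Matrix.cons_val_two, Matrix.cons_val_three,
    Matrix.tail_cons, map_mul, map_add, map_sub, map_pow, map_ofNat]
  ring
end

section
/- Let G be a group, H ≤ G a subgroup of index 2, and (ρ, V) a finite-dimensional representation of H over a field k. For σ ∈ G ∖ H, define ρ_σ : G → GL(V ⊗ V) on pure tensors by ρ_σ(g)(v ⊗ w) = (ρ(g)v) ⊗ (ρ(σ^{-1}gσ)w) for g ∈ H, and ρ_σ(g)(v ⊗ w) = (ρ(gσ)w) ⊗ (ρ(σ^{-1}g)v) for g ∉ H. Then: (a) ρ_σ is a group homomorphism; (b) for any two choices σ₁, σ₂ ∈ G ∖ H, the representations ρ_{σ₁} and ρ_{σ₂} are isomorphic. -/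
open scoped TensorProduct

/-- Tensor induction along an index-2 subgroup: if `f` is given on pure tensors by
`f g (v ⊗ w) = ρ(g)v ⊗ ρ(σ⁻¹gσ)w` for `g ∈ H` and `f g (v ⊗ w) = ρ(gσ)w ⊗ ρ(σ⁻¹g)v`
for `g ∉ H`, then (a) `f` is a group homomorphism, and (b) its isomorphism class is
independent of the choice of `σ ∈ G ∖ H`. -/
theorem stmt_5 (k G V : Type*) [Field k] [Group G] [AddCommGroup V] [Module k V]
    [FiniteDimensional k V]
    (H : Subgroup G) (hH : H.index = 2)
    (ρ : Representation k H V)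
    (σ₁ σ₂ : G) (hσ₁ : σ₁ ∉ H) (hσ₂ : σ₂ ∉ H)
    (f₁ f₂ : G → (V ⊗[k] V →ₗ[k] V ⊗[k] V))
    (hf₁mem : ∀ (g : G) (hg : g ∈ H) (hg' : σ₁⁻¹ * g * σ₁ ∈ H) (v w : V),
      f₁ g (v ⊗ₜ[k] w) = (ρ ⟨g, hg⟩ v) ⊗ₜ[k] (ρ ⟨σ₁⁻¹ * g * σ₁, hg'⟩ w))
    (hf₁nmem : ∀ (g : G) (hg : g ∉ H) (h1 : g * σ₁ ∈ H) (h2 : σ₁⁻¹ * g ∈ H) (v w : V),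
      f₁ g (v ⊗ₜ[k] w) = (ρ ⟨g * σ₁, h1⟩ w) ⊗ₜ[k] (ρ ⟨σ₁⁻¹ * g, h2⟩ v))
    (hf₂mem : ∀ (g : G) (hg : g ∈ H) (hg' : σ₂⁻¹ * g * σ₂ ∈ H) (v w : V),
      f₂ g (v ⊗ₜ[k] w) = (ρ ⟨g, hg⟩ v) ⊗ₜ[k] (ρ ⟨σ₂⁻¹ * g * σ₂, hg'⟩ w))
    (hf₂nmem : ∀ (g : G) (hg : g ∉ H) (h1 : g * σ₂ ∈ H) (h2 : σ₂⁻¹ * g ∈ H) (v w : V),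
      f₂ g (v ⊗ₜ[k] w) = (ρ ⟨g * σ₂, h1⟩ w) ⊗ₜ[k] (ρ ⟨σ₂⁻¹ * g, h2⟩ v)) :
    (f₁ 1 = LinearMap.id ∧ ∀ g h : G, f₁ (g * h) = (f₁ g).comp (f₁ h)) ∧
    ∃ e : (V ⊗[k] V) ≃ₗ[k] (V ⊗[k] V),
      ∀ g : G, e.toLinearMap.comp (f₁ g) = (f₂ g).comp e.toLinearMap := by
  have memIff : ∀ a b : G, a * b ∈ H ↔ (a ∈ H ↔ b ∈ H) := fun a b =>
    Subgroup.mul_mem_iff_of_index_two hH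
  have hmul : ∀ (x y : H) (v : V), ρ x (ρ y v) = ρ (x * y) v := fun x y v => by
    rw [map_mul]; rfl
  constructor
  · constructor
    · refine TensorProduct.ext' fun v w => ?_
      rw [hf₁mem 1 H.one_mem (by simpa using H.one_mem)]
      rw [show (⟨(1:G), H.one_mem⟩ : H) = 1 from Subtype.ext (by push_cast; group),
        show (⟨σ₁⁻¹ * 1 * σ₁, by simpa using H.one_mem⟩ : H) = 1 from
          Subtype.ext (by push_cast; group)]
      simp
    · intro g h
      refine TensorProduct.ext' fun v w => ?_
      simp only [LinearMap.comp_apply]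
      by_cases hg : g ∈ H <;> by_cases hh : h ∈ H
      · have hgh : g * h ∈ H := by simp only [memIff, inv_mem_iff]; tauto
        have c1 : σ₁⁻¹ * h * σ₁ ∈ H := by simp only [memIff, inv_mem_iff]; tauto
        have c2 : σ₁⁻¹ * g * σ₁ ∈ H := by simp only [memIff, inv_mem_iff]; tauto
        have c3 : σ₁⁻¹ * (g * h) * σ₁ ∈ H := by simp only [memIff, inv_mem_iff]; tauto
        rw [hf₁mem h hh c1, hf₁mem g hg c2, hf₁mem (g*h) hgh c3, hmul, hmul,
          show (⟨g*h, hgh⟩ : H) = ⟨g, hg⟩ * ⟨h, hh⟩ from Subtype.ext (by push_cast; group),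
          show (⟨σ₁⁻¹ * (g*h) * σ₁, c3⟩ : H) = ⟨σ₁⁻¹ * g * σ₁, c2⟩ * ⟨σ₁⁻¹ * h * σ₁, c1⟩ from
            Subtype.ext (by push_cast; group)]
      · have hgh : g * h ∉ H := by simp only [memIff, inv_mem_iff]; tauto
        have c1 : h * σ₁ ∈ H := by simp only [memIff, inv_mem_iff]; tauto
        have c2 : σ₁⁻¹ * h ∈ H := by simp only [memIff, inv_mem_iff]; tauto
        have c3 : σ₁⁻¹ * g * σ₁ ∈ H := by simp only [memIff, inv_mem_iff]; tauto
        have c4 : (g * h) * σ₁ ∈ H := by simp only [memIff, inv_mem_iff]; tauto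
        have c5 : σ₁⁻¹ * (g * h) ∈ H := by simp only [memIff, inv_mem_iff]; tauto
        rw [hf₁nmem h hh c1 c2, hf₁mem g hg c3, hf₁nmem (g*h) hgh c4 c5, hmul, hmul,
          show (⟨g*h*σ₁, c4⟩ : H) = ⟨g, hg⟩ * ⟨h * σ₁, c1⟩ from Subtype.ext (by push_cast; group),
          show (⟨σ₁⁻¹ * (g*h), c5⟩ : H) = ⟨σ₁⁻¹ * g * σ₁, c3⟩ * ⟨σ₁⁻¹ * h, c2⟩ from
            Subtype.ext (by push_cast; group)]
      · have hgh : g * h ∉ H := by simp only [memIff, inv_mem_iff]; tauto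
        have c1 : σ₁⁻¹ * h * σ₁ ∈ H := by simp only [memIff, inv_mem_iff]; tauto
        have c2 : g * σ₁ ∈ H := by simp only [memIff, inv_mem_iff]; tauto
        have c3 : σ₁⁻¹ * g ∈ H := by simp only [memIff, inv_mem_iff]; tauto
        have c4 : (g * h) * σ₁ ∈ H := by simp only [memIff, inv_mem_iff]; tauto
        have c5 : σ₁⁻¹ * (g * h) ∈ H := by simp only [memIff, inv_mem_iff]; tauto
        rw [hf₁mem h hh c1, hf₁nmem g hg c2 c3, hf₁nmem (g*h) hgh c4 c5, hmul, hmul,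
          show (⟨g*h*σ₁, c4⟩ : H) = ⟨g * σ₁, c2⟩ * ⟨σ₁⁻¹ * h * σ₁, c1⟩ from
            Subtype.ext (by push_cast; group),
          show (⟨σ₁⁻¹ * (g*h), c5⟩ : H) = ⟨σ₁⁻¹ * g, c3⟩ * ⟨h, hh⟩ from
            Subtype.ext (by push_cast; group)]
      · have hgh : g * h ∈ H := by simp only [memIff, inv_mem_iff]; tauto
        have c1 : h * σ₁ ∈ H := by simp only [memIff, inv_mem_iff]; tauto
        have c2 : σ₁⁻¹ * h ∈ H := by simp only [memIff, inv_mem_iff]; tauto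
        have c3 : g * σ₁ ∈ H := by simp only [memIff, inv_mem_iff]; tauto
        have c4 : σ₁⁻¹ * g ∈ H := by simp only [memIff, inv_mem_iff]; tauto
        have c5 : σ₁⁻¹ * (g * h) * σ₁ ∈ H := by simp only [memIff, inv_mem_iff]; tauto
        rw [hf₁nmem h hh c1 c2, hf₁nmem g hg c3 c4, hf₁mem (g*h) hgh c5, hmul, hmul,
          show (⟨g*h, hgh⟩ : H) = ⟨g * σ₁, c3⟩ * ⟨σ₁⁻¹ * h, c2⟩ from
            Subtype.ext (by push_cast; group),
          show (⟨σ₁⁻¹ * (g*h) * σ₁, c5⟩ : H) = ⟨σ₁⁻¹ * g, c4⟩ * ⟨h * σ₁, c1⟩ from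
            Subtype.ext (by push_cast; group)]
  · have hd : σ₁⁻¹ * σ₂ ∈ H := by simp only [memIff, inv_mem_iff]; tauto
    have heq : ∀ (x y : H) (v : V), (x : G) = y → ρ x v = ρ y v := fun x y v hxy => by
      rw [Subtype.ext hxy]
    refine ⟨TensorProduct.congr (LinearEquiv.refl k V)
      (LinearEquiv.ofLinear (ρ (⟨σ₁⁻¹ * σ₂, hd⟩ : H)⁻¹) (ρ ⟨σ₁⁻¹ * σ₂, hd⟩)
        (by ext v; simp only [LinearMap.comp_apply, LinearMap.id_apply, hmul,
              inv_mul_cancel, map_one, Module.End.one_apply])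
        (by ext v; simp only [LinearMap.comp_apply, LinearMap.id_apply, hmul,
              mul_inv_cancel, map_one, Module.End.one_apply])), fun g => ?_⟩
    refine TensorProduct.ext' fun v w => ?_
    simp only [LinearMap.comp_apply, LinearEquiv.coe_coe]
    by_cases hg : g ∈ H
    · have c1 : σ₁⁻¹ * g * σ₁ ∈ H := by simp only [memIff, inv_mem_iff]; tauto
      have c2 : σ₂⁻¹ * g * σ₂ ∈ H := by simp only [memIff, inv_mem_iff]; tauto
      rw [hf₁mem g hg c1]
      simp only [TensorProduct.congr_tmul, LinearEquiv.refl_apply, LinearEquiv.ofLinear_apply]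
      rw [hf₂mem g hg c2, hmul, hmul]
      exact congrArg _ (heq _ _ w (by push_cast; group))
    · have c1 : g * σ₁ ∈ H := by simp only [memIff, inv_mem_iff]; tauto
      have c2 : σ₁⁻¹ * g ∈ H := by simp only [memIff, inv_mem_iff]; tauto
      have c3 : g * σ₂ ∈ H := by simp only [memIff, inv_mem_iff]; tauto
      have c4 : σ₂⁻¹ * g ∈ H := by simp only [memIff, inv_mem_iff]; tauto
      rw [hf₁nmem g hg c1 c2]
      simp only [TensorProduct.congr_tmul, LinearEquiv.refl_apply, LinearEquiv.ofLinear_apply]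
      rw [hf₂nmem g hg c3 c4, hmul, hmul]
      refine congrArg₂ _ (heq _ _ w (by push_cast; group)) (heq _ _ v (by push_cast; group))
end
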